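/- Let f be a real-valued function on p×p real matrices that is L-Lipschitz differentiable with gradient G and (μ,r)-restricted strongly convex with μ > 0. Let X̃, X̃' be PSD matrices of rank at most r with X̃ ≠ X̃', let ε ≥ 0 (with μ + ε > 0), let m be a positive integer, and define the stabilized Barzilai–Borwein step size η := (1/m)·‖X̃ − X̃'‖_F² / (|⟨X̃ − X̃', G(X̃) − G(X̃')⟩| + ε‖X̃ − X̃'‖_F²). Then 1/(m(L + ε)) ≤ η ≤ 1/(m(μ + ε)). -/
import Mathlib


open Matrix BigOperators

attribute [local instance] Matrix.normedAddCommGroup Matrix.normedSpace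

/-- Euclidean norm of a real vector. -/
noncomputable def vnorm {n : ℕ} (x : Fin n → ℝ) : ℝ :=
  Real.sqrt (∑ i, x i ^ 2)

/-- Frobenius norm of a real matrix. -/
noncomputable def frob {m n : ℕ} (A : Matrix (Fin m) (Fin n) ℝ) : ℝ :=
  Real.sqrt (∑ i, ∑ j, A i j ^ 2)

/-- Frobenius inner product `⟨A, B⟩ = tr(Aᵀ B)`. -/
noncomputable def finner {m n : ℕ} (A B : Matrix (Fin m) (Fin n) ℝ) : ℝ :=
  (Aᵀ * B).trace

/-- The continuous linear map `H ↦ ⟨A, H⟩ = tr(Aᵀ H)`. -/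
noncomputable def gradCLM {p : ℕ} (A : Matrix (Fin p) (Fin p) ℝ) :
    Matrix (Fin p) (Fin p) ℝ →L[ℝ] ℝ :=
  LinearMap.toContinuousLinearMap
    ((Matrix.traceLinearMap (Fin p) ℝ ℝ).comp (LinearMap.mulLeft ℝ Aᵀ))

/-- `h` is differentiable with Fréchet derivative at `X` given by `H ↦ ⟨G X, H⟩`. -/
def HasGradient {p : ℕ} (h : Matrix (Fin p) (Fin p) ℝ → ℝ)
    (G : Matrix (Fin p) (Fin p) ℝ → Matrix (Fin p) (Fin p) ℝ) : Prop :=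
  ∀ X, HasFDerivAt h (gradCLM (G X)) X

/-- The gradient map `G` is `L`-Lipschitz (in Frobenius norm) on PSD matrices. -/
def LipGradOnPSD {p : ℕ} (L : ℝ)
    (G : Matrix (Fin p) (Fin p) ℝ → Matrix (Fin p) (Fin p) ℝ) : Prop :=
  ∀ X Y : Matrix (Fin p) (Fin p) ℝ, X.PosSemidef → Y.PosSemidef →
    frob (G X - G Y) ≤ L * frob (X - Y)

/-- `(μ, r)`-restricted strong convexity. -/
def RSC {p : ℕ} (μ : ℝ) (r : ℕ) (h : Matrix (Fin p) (Fin p) ℝ → ℝ)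
    (G : Matrix (Fin p) (Fin p) ℝ → Matrix (Fin p) (Fin p) ℝ) : Prop :=
  ∀ X Y : Matrix (Fin p) (Fin p) ℝ, X.PosSemidef → Y.PosSemidef →
    X.rank ≤ r → Y.rank ≤ r →
      h X + finner (G X) (Y - X) + μ / 2 * frob (Y - X) ^ 2 ≤ h Y

/-- `P` is the orthogonal projection onto the column space of `U`. -/
def IsColProj {p r : ℕ} (U : Matrix (Fin p) (Fin r) ℝ)
    (P : Matrix (Fin p) (Fin p) ℝ) : Prop :=
  Pᵀ = P ∧ P * P = P ∧ P * U = U ∧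
    ∀ y : Fin p → ℝ, (∃ w, P *ᵥ w = y) → ∃ c : Fin r → ℝ, U *ᵥ c = y


lemma finner_eq_sum {m n : ℕ} (A B : Matrix (Fin m) (Fin n) ℝ) :
    finner A B = ∑ i, ∑ j, A i j * B i j := by
  simp [finner, Matrix.trace, Matrix.mul_apply, Matrix.diag]
  rw [Finset.sum_comm]

lemma frob_sq {m n : ℕ} (A : Matrix (Fin m) (Fin n) ℝ) :
    frob A ^ 2 = ∑ i, ∑ j, A i j ^ 2 := Real.sq_sqrt (by positivity)

lemma frob_pos {m n : ℕ} (A : Matrix (Fin m) (Fin n) ℝ) (h : A ≠ 0) : 0 < frob A := by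
  apply Real.sqrt_pos.mpr
  obtain ⟨i, j, hij⟩ : ∃ i j, A i j ≠ 0 := by
    by_contra hc
    push_neg at hc
    exact h (by ext i j; simp [hc])
  apply Finset.sum_pos' (fun i _ => Finset.sum_nonneg fun j _ => sq_nonneg _)
  exact ⟨i, Finset.mem_univ i, Finset.sum_pos' (fun j _ => sq_nonneg _)
    ⟨j, Finset.mem_univ j, by positivity⟩⟩

lemma finner_le {m n : ℕ} (A B : Matrix (Fin m) (Fin n) ℝ) :
    |finner A B| ≤ frob A * frob B := by
  have key := Finset.sum_mul_sq_le_sq_mul_sq (Finset.univ : Finset (Fin m × Fin n))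
    (fun q => A q.1 q.2) (fun q => B q.1 q.2)
  have h1 : finner A B = ∑ q : Fin m × Fin n, A q.1 q.2 * B q.1 q.2 := by
    rw [finner_eq_sum, ← Finset.univ_product_univ, Finset.sum_product]
  have h2 : frob A ^ 2 = ∑ q : Fin m × Fin n, A q.1 q.2 ^ 2 := by
    rw [frob_sq, ← Finset.univ_product_univ, Finset.sum_product]
  have h3 : frob B ^ 2 = ∑ q : Fin m × Fin n, B q.1 q.2 ^ 2 := by
    rw [frob_sq, ← Finset.univ_product_univ, Finset.sum_product]
  have hA : 0 ≤ frob A := Real.sqrt_nonneg _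
  have hB : 0 ≤ frob B := Real.sqrt_nonneg _
  rw [h1]; rw [← h2, ← h3] at key
  calc |∑ q : Fin m × Fin n, A q.1 q.2 * B q.1 q.2|
      = Real.sqrt ((∑ q : Fin m × Fin n, A q.1 q.2 * B q.1 q.2) ^ 2) :=
        (Real.sqrt_sq_eq_abs _).symm
    _ ≤ Real.sqrt (frob A ^ 2 * frob B ^ 2) := Real.sqrt_le_sqrt key
    _ = frob A * frob B := by rw [← mul_pow, Real.sqrt_sq (mul_nonneg hA hB)]

lemma frob_sub_comm {m n : ℕ} (A B : Matrix (Fin m) (Fin n) ℝ) :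
    frob (A - B) = frob (B - A) := by
  unfold frob
  congr 1
  refine Finset.sum_congr rfl fun i _ => Finset.sum_congr rfl fun j _ => ?_
  simp only [Matrix.sub_apply]; ring

lemma finner_comm {m n : ℕ} (A B : Matrix (Fin m) (Fin n) ℝ) :
    finner A B = finner B A := by
  simp only [finner_eq_sum]
  exact Finset.sum_congr rfl fun i _ => Finset.sum_congr rfl fun j _ => mul_comm _ _

lemma finner_sub_left {m n : ℕ} (A B C : Matrix (Fin m) (Fin n) ℝ) :
    finner (A - B) C = finner A C - finner B C := by
  simp [finner_eq_sum, Matrix.sub_apply, sub_mul, Finset.sum_sub_distrib]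

lemma finner_sub_neg {m n : ℕ} (A B C : Matrix (Fin m) (Fin n) ℝ) :
    finner A (B - C) = - finner A (C - B) := by
  simp only [finner_eq_sum, Matrix.sub_apply, ← Finset.sum_neg_distrib]
  exact Finset.sum_congr rfl fun i _ => Finset.sum_congr rfl fun j _ => by ring

/-- bounds for the stabilized Barzilai–Borwein step size. -/
theorem sbb_step_size_bounds {p : ℕ} (L μ ε : ℝ) (r m : ℕ) (hm : 0 < m)
    (hL : 0 < L) (hμ : 0 < μ) (hμε : 0 < μ + ε) (hε : 0 ≤ ε)
    (f : Matrix (Fin p) (Fin p) ℝ → ℝ)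
    (G : Matrix (Fin p) (Fin p) ℝ → Matrix (Fin p) (Fin p) ℝ)
    (hgrad : HasGradient f G) (hlip : LipGradOnPSD L G) (hrsc : RSC μ r f G)
    (X Y : Matrix (Fin p) (Fin p) ℝ)
    (hX : X.PosSemidef) (hY : Y.PosSemidef) (hXr : X.rank ≤ r) (hYr : Y.rank ≤ r)
    (hne : X ≠ Y) (η : ℝ)
    (hη : η = (1 / (m : ℝ)) * (frob (X - Y) ^ 2 /
      (|finner (X - Y) (G X - G Y)| + ε * frob (X - Y) ^ 2))) :
    1 / ((m : ℝ) * (L + ε)) ≤ η ∧ η ≤ 1 / ((m : ℝ) * (μ + ε)) := by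
  have hDne : X - Y ≠ 0 := sub_ne_zero.mpr hne
  have hfpos : 0 < frob (X - Y) := frob_pos _ hDne
  set s : ℝ := frob (X - Y) ^ 2 with hs_def
  have hs : 0 < s := by positivity
  set c : ℝ := finner (X - Y) (G X - G Y) with hc_def
  -- lower bound on c from restricted strong convexity
  have h1 := hrsc X Y hX hY hXr hYr
  have h2 := hrsc Y X hY hX hYr hXr
  have hfc : frob (Y - X) = frob (X - Y) := frob_sub_comm Y X
  have e1 : finner (G X) (Y - X) = - finner (G X) (X - Y) := finner_sub_neg _ _ _
  have e2 : c = finner (G X) (X - Y) - finner (G Y) (X - Y) := by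
    rw [hc_def, finner_comm, finner_sub_left]
  have hclow : μ * s ≤ c := by
    rw [hfc] at h1
    rw [e2]
    nlinarith [h1, h2]
  have hcpos : 0 < c := lt_of_lt_of_le (mul_pos hμ hs) hclow
  have habs : |c| = c := abs_of_pos hcpos
  -- upper bound on c from Lipschitz gradient
  have hchigh : c ≤ L * s := by
    have hcs := finner_le (X - Y) (G X - G Y)
    have hl := hlip X Y hX hY
    have := le_abs_self c
    nlinarith [hfpos]
  -- final arithmetic
  have hm' : (0 : ℝ) < m := Nat.cast_pos.mpr hm
  have hden : 0 < c + ε * s := by positivity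
  have hη' : η = s / (m * (c + ε * s)) := by
    rw [hη, habs, div_mul_div_comm, one_mul]
  rw [hη']
  constructor
  · rw [div_le_div_iff₀ (by positivity) (by positivity)]
    nlinarith [hchigh]
  · rw [div_le_div_iff₀ (by positivity) (by positivity)]
    nlinarith [hclow]
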